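/- arXiv:2604.14628 — 4 statements merged into one kernel-verified Lean document; each statement's English description precedes it below -/
import Mathlib

section
/- The stabilizer in PGL(4,2) of the twisted cubic C ⊂ PG(3,2) (as a set) has order 48. -/
open scoped LinearAlgebra.Projectivization

/-- The twisted cubic in `PG(3,2)`. -/
def twistedCubic2 : Set (ℙ (ZMod 2) (Fin 4 → ZMod 2)) :=
  {Projectivization.mk (ZMod 2) ![0, 0, 0, 1] (by decide),
   Projectivization.mk (ZMod 2) ![1, 1, 1, 1] (by decide),
   Projectivization.mk (ZMod 2) ![1, 0, 0, 0] (by decide)}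

/-!
Over `𝔽₂` every nonzero vector is the unique representative of its point, so projectivities are
the same as linear automorphisms and the stabilizer of `C` is the group of linear automorphisms
permuting the three vectors `e₄, e₁ + e₂ + e₃ + e₄, e₁`. These are linearly independent, and
together with `e₂` they form a basis; an automorphism permuting them is therefore given by a
permutation of the three vectors (`3!` choices) and an image of `e₂` outside their span
(`2⁴ - 2³` choices), which makes `6 · 8 = 48`.
-/

open Module Function Set

namespace Projectivization

variable {K V : Type*} [DivisionRing K] [Subsingleton Kˣ] [AddCommGroup V] [Module K V]

theorem mk_eq_mk_iff_of_subsingleton_units {v w : V} (hv : v ≠ 0) (hw : w ≠ 0) :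
    mk K v hv = mk K w hw ↔ v = w := by
  rw [mk_eq_mk_iff]
  exact ⟨fun ⟨a, ha⟩ => by rw [← ha, Subsingleton.elim a 1, one_smul],
    fun h => ⟨1, by rw [h, one_smul]⟩⟩

theorem rep_mk_of_subsingleton_units {v : V} (hv : v ≠ 0) : (mk K v hv).rep = v :=
  (mk_eq_mk_iff_of_subsingleton_units _ hv).mp (mk_rep _)

theorem rep_injective_of_subsingleton_units :
    Injective (Projectivization.rep : ℙ K V → V) := by
  intro p q h
  rw [← mk_rep p, ← mk_rep q]
  exact (mk_eq_mk_iff_of_subsingleton_units _ _).mpr h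

theorem rep_map_of_subsingleton_units {W : Type*} [AddCommGroup W] [Module K W]
    (g : V →ₗ[K] W) (hg : Injective g) (p : ℙ K V) : (map g hg p).rep = g p.rep := by
  conv_lhs => rw [← mk_rep p, map_mk]
  exact rep_mk_of_subsingleton_units _

theorem map_injective_of_subsingleton_units :
    Injective fun g : V ≃ₗ[K] V => map (g : V →ₗ[K] V) g.injective := by
  intro g g' h
  ext v
  obtain rfl | hv := eq_or_ne v 0
  · simp
  · simpa [rep_map_of_subsingleton_units, rep_mk_of_subsingleton_units] using
      congrArg Projectivization.rep (congrFun h (mk K v hv))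

theorem map_image_eq_iff_of_subsingleton_units (g : V ≃ₗ[K] V) (C : Set (ℙ K V)) :
    map (g : V →ₗ[K] V) g.injective '' C = C ↔
      g '' (Projectivization.rep '' C) = Projectivization.rep '' C := by
  rw [← (rep_injective_of_subsingleton_units (K := K)).image_injective.eq_iff, image_image,
    image_image]
  simp only [rep_map_of_subsingleton_units]
  rfl

theorem ncard_setOf_map_image_eq_of_subsingleton_units (C : Set (ℙ K V)) :
    {f : ℙ K V → ℙ K V |
        (∃ g : V ≃ₗ[K] V, f = map (g : V →ₗ[K] V) g.injective) ∧ f '' C = C}.ncard =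
      Nat.card {g : V ≃ₗ[K] V //
        g '' (Projectivization.rep '' C) = Projectivization.rep '' C} := by
  have hstab : {f : ℙ K V → ℙ K V |
        (∃ g : V ≃ₗ[K] V, f = map (g : V →ₗ[K] V) g.injective) ∧ f '' C = C} =
      (fun g : V ≃ₗ[K] V => map (g : V →ₗ[K] V) g.injective) ''
        {g | g '' (Projectivization.rep '' C) = Projectivization.rep '' C} := by
    ext f
    constructor
    · rintro ⟨⟨g, rfl⟩, hg⟩
      exact ⟨g, (map_image_eq_iff_of_subsingleton_units g C).mp hg, rfl⟩
    · rintro ⟨g, hg, rfl⟩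
      exact ⟨⟨g, rfl⟩, (map_image_eq_iff_of_subsingleton_units g C).mpr hg⟩
  rw [hstab, ncard_image_of_injective _ map_injective_of_subsingleton_units,
    ← Nat.card_coe_set_eq]
  rfl

end Projectivization

theorem Function.Injective.exists_perm_comp_eq_of_range_eq {α β : Type*} {f g : α → β}
    (hf : Injective f) (hg : Injective g) (h : range g = range f) :
    ∃ σ : Equiv.Perm α, f ∘ σ = g :=
  ⟨(Equiv.ofInjective g hg).trans ((Equiv.setCongr h).trans (Equiv.ofInjective f hf).symm),
    funext fun i => by simp [Equiv.apply_ofInjective_symm]⟩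

section Count

open scoped Nat

variable {K V : Type*} [DivisionRing K] [AddCommGroup V] [Module K V]

noncomputable def Module.Basis.linearEquivEquivLinearIndependent {ι : Type*} [Fintype ι]
    (B : Basis ι K V) : (V ≃ₗ[K] V) ≃ {v : ι → V // LinearIndependent K v} :=
  haveI := Module.Finite.of_basis B
  { toFun g := ⟨g ∘ B, B.linearIndependent.map' _ g.ker⟩
    invFun v := B.equiv
      (basisOfLinearIndependentOfCardEqFinrank' v.1 v.2 (finrank_eq_card_basis B).symm)
      (Equiv.refl ι)
    left_inv g := B.ext' fun i => by simp
    right_inv v := Subtype.ext <| funext fun i => by simp }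

noncomputable def LinearIndependent.permProdComplSpanEquiv {n : ℕ} {s : Fin n → V}
    (hs : LinearIndependent K s) :
    Equiv.Perm (Fin n) × ((Submodule.span K (range s) : Set V)ᶜ : Set V) ≃
      {v : {v : Fin (n + 1) → V // LinearIndependent K v} // range (Fin.tail v.1) = range s} :=
  Equiv.ofBijective
    (fun p => ⟨⟨Fin.cons p.2.1 (s ∘ p.1), linearIndependent_finCons.mpr
      ⟨hs.comp _ p.1.injective, by rw [range_comp, p.1.range_eq_univ, image_univ]; exact p.2.2⟩⟩,
      by simp [range_comp]⟩)
    ⟨fun ⟨σ, u⟩ ⟨τ, w⟩ h => by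
      have hcons : (Fin.cons u.1 (s ∘ σ) : Fin (n + 1) → V) = Fin.cons w.1 (s ∘ τ) :=
        congrArg (·.1.1) h
      obtain ⟨huw, hst⟩ := Fin.cons_injective2 hcons
      simp only [Prod.mk.injEq]
      exact ⟨Equiv.ext fun i => hs.injective (congrFun hst i), Subtype.ext huw⟩,
     fun ⟨⟨v, hv⟩, hrange⟩ => by
      obtain ⟨htail, hhead⟩ := linearIndependent_finCons.mp ((Fin.cons_self_tail v).symm ▸ hv)
      obtain ⟨σ, hσ⟩ := hs.injective.exists_perm_comp_eq_of_range_eq htail.injective hrange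
      refine ⟨⟨σ, v 0, by simpa [← hrange] using hhead⟩, ?_⟩
      simp [hσ, Fin.cons_self_tail]⟩

theorem LinearIndependent.natCard_compl_span [Fintype K] [Finite V] {n : ℕ} {s : Fin n → V}
    (hs : LinearIndependent K s) :
    Nat.card ((Submodule.span K (range s) : Set V)ᶜ : Set V) =
      Fintype.card K ^ finrank K V - Fintype.card K ^ n := by
  classical
  have := Fintype.ofFinite V
  have hV : Nat.card V = Fintype.card K ^ finrank K V := by
    rw [Nat.card_eq_fintype_card, Module.card_eq_pow_finrank (K := K)]
  have hspan : Nat.card (Submodule.span K (range s)) = Fintype.card K ^ n := by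
    rw [Nat.card_eq_fintype_card, Module.card_eq_pow_finrank (K := K), finrank_span_eq_card hs,
      Fintype.card_fin]
  rw [Nat.card_coe_set_eq, ncard_compl, ← hV, ← hspan, ← Nat.card_coe_set_eq,
    SetLike.coe_sort_coe]

theorem Module.Basis.natCard_linearEquiv_image_range_tail_eq [Fintype K] {n : ℕ}
    (B : Basis (Fin (n + 1)) K V) :
    Nat.card {g : V ≃ₗ[K] V // g '' range (Fin.tail B) = range (Fin.tail B)} =
      n ! * (Fintype.card K ^ (n + 1) - Fintype.card K ^ n) := by
  have : Module.Finite K V := Module.Finite.of_basis B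
  have : Finite V := Module.finite_of_finite K
  have hs : LinearIndependent K (Fin.tail B) := B.linearIndependent.comp _ (Fin.succ_injective n)
  calc _ = Nat.card {v : {v : Fin (n + 1) → V // LinearIndependent K v} //
        range (Fin.tail v.1) = range (Fin.tail B)} :=
        Nat.card_congr <| B.linearEquivEquivLinearIndependent.subtypeEquiv fun g => by
          rw [← range_comp]; rfl
    _ = _ := by
      rw [← Nat.card_congr hs.permProdComplSpanEquiv, Nat.card_prod, Nat.card_perm, Nat.card_fin,
        hs.natCard_compl_span, finrank_eq_card_basis B, Fintype.card_fin]

end Count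

noncomputable def twistedCubic2Basis : Basis (Fin 4) (ZMod 2) (Fin 4 → ZMod 2) :=
  basisOfLinearIndependentOfCardEqFinrank'
    ![![0, 1, 0, 0], ![1, 0, 0, 0], ![1, 1, 1, 1], ![0, 0, 0, 1]]
    (Fintype.linearIndependent_iff.mpr (by decide)) (by simp)

theorem rep_image_twistedCubic2 :
    Projectivization.rep '' twistedCubic2 = range (Fin.tail twistedCubic2Basis) := by
  simp [twistedCubic2, image_insert_eq, Projectivization.rep_mk_of_subsingleton_units,
    twistedCubic2Basis]

/-- The setwise stabilizer of the twisted cubic `C ⊂ PG(3,2)` in the group of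
projectivities of `PG(3,2)` (maps of points induced by invertible linear maps of `F₂⁴`)
has order `48`. -/
theorem twistedCubic2_stabilizer_card :
    {f : ℙ (ZMod 2) (Fin 4 → ZMod 2) → ℙ (ZMod 2) (Fin 4 → ZMod 2) |
        (∃ g : (Fin 4 → ZMod 2) ≃ₗ[ZMod 2] (Fin 4 → ZMod 2),
          f = Projectivization.map (g : (Fin 4 → ZMod 2) →ₗ[ZMod 2] (Fin 4 → ZMod 2))
            g.injective) ∧ f '' twistedCubic2 = twistedCubic2}.ncard = 48 := by
  rw [Projectivization.ncard_setOf_map_image_eq_of_subsingleton_units, rep_image_twistedCubic2,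
    twistedCubic2Basis.natCard_linearEquiv_image_range_tail_eq, ZMod.card]
  rfl
end

section
/- For q ≡ 0 (mod 3), the q+1 osculating planes of the twisted cubic in PG(3,q) all pass through a common line (they form a pencil of planes). -/
/-- The linear functional defining the osculating plane of the twisted cubic at `P(t)`:
`x₀ - 3t x₁ + 3t² x₂ - t³ x₃`. -/
def oscFunctional {F : Type} [Field F] (t : F) : (Fin 4 → F) →ₗ[F] F :=
  LinearMap.proj 0 - (3 * t) • LinearMap.proj 1 + (3 * t ^ 2) • LinearMap.proj 2
    - t ^ 3 • LinearMap.proj 3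

/-- For `q ≡ 0 (mod 3)`, the `q+1` osculating planes of the twisted cubic in `PG(3,q)`
all pass through a common line: there is a `2`-dimensional subspace contained in the
osculating plane at `P(t)` for every `t ∈ F_q` and in the osculating plane `x₃ = 0`
at `P(∞)`. -/
theorem osculating_planes_form_pencil (F : Type) [Field F] [Fintype F]
    (h3 : (3 : F) = 0) :
    ∃ L : Submodule F (Fin 4 → F), Module.finrank F L = 2 ∧
      (∀ t : F, L ≤ LinearMap.ker (oscFunctional t)) ∧
      L ≤ LinearMap.ker (LinearMap.proj 3 : (Fin 4 → F) →ₗ[F] F) := by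
  classical
  set v1 : Fin 4 → F := Pi.single 1 1
  set v2 : Fin 4 → F := Pi.single 2 1
  refine ⟨Submodule.span F {v1, v2}, ?_, ?_, ?_⟩
  · have hli : LinearIndependent F ![v1, v2] := by
      rw [LinearIndependent.pair_iff]
      intro s t hst
      have h1 := congrFun hst 1
      have h2 := congrFun hst 2
      simp [v1, v2] at h1 h2
      exact ⟨h1, h2⟩
    have h := finrank_span_eq_card hli
    rw [show ({v1, v2} : Set (Fin 4 → F)) = Set.range ![v1, v2] by
      simp [Matrix.range_cons, Matrix.range_empty, Set.pair_comm]]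
    simpa using h
  · intro t x hx
    simp only [LinearMap.mem_ker]
    refine Submodule.span_induction ?_ ?_ ?_ ?_ hx
    · rintro x (rfl | rfl) <;>
        simp [oscFunctional, v1, v2, h3]
    · simp
    · intro a b _ _ ha hb; rw [map_add, ha, hb, add_zero]
    · intro a x _ hx; rw [map_smul, hx, smul_zero]
  · intro x hx
    simp only [LinearMap.mem_ker]
    refine Submodule.span_induction ?_ ?_ ?_ ?_ hx
    · rintro x (rfl | rfl) <;> simp [v1, v2]
    · simp
    · intro a b _ _ ha hb; rw [map_add, ha, hb, add_zero]
    · intro a x _ hx; rw [map_smul, hx, smul_zero]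
end

section
/- In PG(3,q), for q ≥ 2, the number of planes meeting the twisted cubic C in exactly 3 points is (q^3 − q)/6, the number of planes meeting C in exactly 2 points is q^2 + q, and the number of planes meeting C in 0 points is (q^3 − q)/3 when q ≥ 5. -/
open scoped LinearAlgebra.Projectivization

lemma twistedCubic_vec_ne_zero {F : Type} [Field F] (a b c : F) :
    ![a, b, c, (1 : F)] ≠ 0 := by
  intro h; simpa using congrFun h 3

lemma infty_vec_ne_zero {F : Type} [Field F] : ![(1 : F), 0, 0, 0] ≠ 0 := by
  intro h; simpa using congrFun h 0

/-- The twisted cubic in `PG(3,q)`. -/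
def twistedCubic (F : Type) [Field F] : Set (ℙ F (Fin 4 → F)) :=
  {p | (∃ t : F, p = Projectivization.mk F ![t ^ 3, t ^ 2, t, 1]
          (twistedCubic_vec_ne_zero _ _ _)) ∨
       p = Projectivization.mk F ![1, 0, 0, 0] infty_vec_ne_zero}

/-!
A plane `p₃x₀ + p₂x₁ + p₁x₂ + p₀x₃ = 0` is given by the polynomial `p = p₃X³ + p₂X² + p₁X + p₀`
up to a scalar, so planes correspond to monic polynomials of degree at most `3`. Such a plane
contains `(t³:t²:t:1)` iff `p(t) = 0`, and `(1:0:0:0)` iff `deg p < 3`. It remains to count the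
monic polynomials of degree `n ≤ 3` over `𝔽_q` with exactly `k` distinct roots; call this `N n k`.
The monic polynomials of degree `n` vanishing on a given `j`-set `S` are the products of
`∏_{s ∈ S} (X - s)` with a monic polynomial of degree `n - j`, so double counting pairs (polynomial,
`j`-subset of its roots) gives `∑ₖ C(k, j) N n k = C(q, j) q^(n-j)`. The cases `j = n`, `j = n - 1`,
and `n = 3, j ≤ 1` of these identities determine every `N n k` that is needed.
-/

open Polynomial Finset

section Hyperplane

variable {K V : Type*} [Field K] [AddCommGroup V] [Module K V] [FiniteDimensional K V]

theorem Submodule.exists_dual_ker_eq_of_finrank_add_one {W : Submodule K V}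
    (hW : Module.finrank K W + 1 = Module.finrank K V) :
    ∃ f : Module.Dual K V, f ≠ 0 ∧ LinearMap.ker f = W := by
  obtain ⟨f, hf, hWf⟩ := W.exists_dual_map_eq_bot_of_lt_top
    (Submodule.lt_top_of_finrank_lt_finrank (by omega)) inferInstance
  refine ⟨f, hf, (Submodule.eq_of_le_of_finrank_eq (LinearMap.le_ker_iff_map.2 hWf) ?_).symm⟩
  have := f.finrank_ker_add_one_of_ne_zero hf
  omega

theorem Module.Dual.exists_eq_smul_of_ker_eq {f g : Module.Dual K V} (hf : f ≠ 0)
    (h : LinearMap.ker f = LinearMap.ker g) : ∃ c : K, g = c • f := by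
  obtain ⟨x, hx⟩ := DFunLike.ne_iff.1 hf
  have hgx : g x ≠ 0 := fun hgx => hx (LinearMap.mem_ker.1 (h ▸ LinearMap.mem_ker.2 hgx))
  refine ⟨g x / f x, (Module.Dual.eq_of_ker_eq_of_apply_eq x ?_ ?_ ?_).symm⟩
  · rw [LinearMap.ker_smul _ _ (div_ne_zero hgx hx), h]
  · simp [div_mul_cancel₀ _ hx]
  · simpa [div_mul_cancel₀ _ hx] using hgx

end Hyperplane

theorem Projectivization.submodule_mk_le_ker_iff {K V W : Type*} [Field K] [AddCommGroup V]
    [Module K V] [AddCommGroup W] [Module K W] {v : V} (hv : v ≠ 0) (f : V →ₗ[K] W) :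
    (Projectivization.mk K v hv).submodule ≤ LinearMap.ker f ↔ f v = 0 := by
  rw [Projectivization.submodule_mk, Submodule.span_singleton_le_iff_mem, LinearMap.mem_ker]

section Monics

variable (R : Type*) [CommRing R] [Fintype R] [DecidableEq R]

noncomputable def monics (n : ℕ) : Finset R[X] :=
  univ.image fun a : Fin n → R => X ^ n + ∑ i : Fin n, C (a i) * X ^ (i : ℕ)

variable {R}

theorem mem_monics [Nontrivial R] {n : ℕ} {p : R[X]} :
    p ∈ monics R n ↔ p.Monic ∧ p.natDegree = n := by
  simp only [monics, mem_image, mem_univ, true_and]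
  constructor
  · rintro ⟨a, rfl⟩
    have hlt := degree_sum_fin_lt a
    refine ⟨monic_X_pow_add hlt, ?_⟩
    rw [natDegree_add_eq_left_of_degree_lt (by rwa [degree_X_pow]), natDegree_X_pow]
  · rintro ⟨hp, rfl⟩
    exact ⟨fun i => p.coeff i, by
      rw [Fin.sum_univ_eq_sum_range (fun i => C (p.coeff i) * X ^ i), ← hp.as_sum]⟩

theorem card_monics (n : ℕ) : #(monics R n) = Fintype.card R ^ n := by
  rw [monics, card_image_of_injective, card_univ, Fintype.card_fun, Fintype.card_fin]
  intro a b hab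
  funext i
  have := congrArg (coeff · i) hab
  simpa [finsetSum_coeff, coeff_C_mul, coeff_X_pow, Fin.val_inj, (Nat.ne_of_lt i.2)] using this

variable [IsDomain R]

omit [Fintype R] in
theorem prod_X_sub_C_dvd_iff_subset_roots {p : R[X]} (hp : p ≠ 0) (S : Finset R) :
    (∏ s ∈ S, (X - C s)) ∣ p ↔ S ⊆ p.roots.toFinset := by
  rw [Finset.prod_eq_multiset_prod, Multiset.prod_X_sub_C_dvd_iff_le_roots hp,
    Multiset.le_iff_subset S.nodup]
  simp [Finset.subset_iff, Multiset.subset_iff]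

theorem card_monics_filter_subset_roots {n : ℕ} {S : Finset R} (hS : #S ≤ n) :
    #{p ∈ monics R n | S ⊆ p.roots.toFinset} = Fintype.card R ^ (n - #S) := by
  set g := ∏ s ∈ S, (X - C s)
  have hg : g.Monic := monic_prod_of_monic _ _ fun s _ => monic_X_sub_C s
  have hdeg : g.natDegree = #S := natDegree_finsetProd_X_sub_C_eq_card S id
  have hdvd (p : R[X]) (hp : p.Monic) : g ∣ p ↔ S ⊆ p.roots.toFinset :=
    prod_X_sub_C_dvd_iff_subset_roots hp.ne_zero S
  have : {p ∈ monics R n | S ⊆ p.roots.toFinset} = (monics R (n - #S)).image (g * ·) := by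
    ext p
    simp only [mem_filter, mem_image, mem_monics]
    constructor
    · rintro ⟨⟨hp, rfl⟩, hSp⟩
      obtain ⟨q, rfl⟩ := (hdvd p hp).2 hSp
      have hq := hg.of_mul_monic_left hp
      exact ⟨q, ⟨hq, by rw [hg.natDegree_mul hq]; omega⟩, rfl⟩
    · rintro ⟨q, ⟨hq, hqn⟩, rfl⟩
      exact ⟨⟨hg.mul hq, by rw [hg.natDegree_mul hq]; omega⟩,
        (hdvd _ (hg.mul hq)).1 (dvd_mul_right g q)⟩
  rw [this, card_image_of_injective _ (mul_right_injective₀ hg.ne_zero), card_monics]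

theorem sum_choose_card_roots_monics {n j : ℕ} (hj : j ≤ n) :
    ∑ p ∈ monics R n, (#p.roots.toFinset).choose j =
      (Fintype.card R).choose j * Fintype.card R ^ (n - j) := calc
  _ = ∑ p ∈ monics R n, #(bipartiteAbove (fun p (S : Finset R) => S ⊆ p.roots.toFinset)
        (powersetCard j univ) p) := by
      refine sum_congr rfl fun p _ => ?_
      rw [← card_powersetCard]
      congr 1
      ext S
      simp [bipartiteAbove, mem_powersetCard, and_comm]
  _ = ∑ S ∈ powersetCard j univ, #{p ∈ monics R n | S ⊆ p.roots.toFinset} :=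
      sum_card_bipartiteAbove_eq_sum_card_bipartiteBelow _
  _ = ∑ S ∈ powersetCard j (univ : Finset R), Fintype.card R ^ (n - j) := by
      refine sum_congr rfl fun S hS => ?_
      obtain ⟨-, hSj⟩ := mem_powersetCard.1 hS
      rw [card_monics_filter_subset_roots (hSj ▸ hj), hSj]
  _ = _ := by rw [sum_const, card_powersetCard, card_univ, smul_eq_mul]

variable (R) in
noncomputable def monicsWithNumRoots (n k : ℕ) : Finset R[X] :=
  {p ∈ monics R n | #p.roots.toFinset = k}

theorem card_roots_toFinset_le_of_mem_monics {n : ℕ} {p : R[X]}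
    (hp : p ∈ monics R n) : #p.roots.toFinset ≤ n :=
  (Multiset.toFinset_card_le _).trans ((card_roots' p).trans (mem_monics.1 hp).2.le)

theorem card_monicsWithNumRoots_of_lt {n k : ℕ} (h : n < k) : #(monicsWithNumRoots R n k) = 0 := by
  rw [monicsWithNumRoots, card_eq_zero]
  exact filter_false_of_mem fun p hp => (card_roots_toFinset_le_of_mem_monics hp).trans_lt h |>.ne

theorem sum_choose_mul_card_monicsWithNumRoots {n j : ℕ} (hj : j ≤ n) :
    ∑ k ∈ range (n + 1), k.choose j * #(monicsWithNumRoots R n k) =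
      (Fintype.card R).choose j * Fintype.card R ^ (n - j) := by
  rw [← sum_choose_card_roots_monics hj,
    ← sum_fiberwise_of_maps_to (g := fun p => #p.roots.toFinset)
      fun p hp => mem_range_succ_iff.2 (card_roots_toFinset_le_of_mem_monics hp)]
  refine sum_congr rfl fun k _ => ?_
  rw [monicsWithNumRoots, sum_congr rfl fun p hp => by rw [(mem_filter.1 hp).2], sum_const,
    smul_eq_mul, mul_comm]

theorem card_monicsWithNumRoots_self (n : ℕ) :
    #(monicsWithNumRoots R n n) = (Fintype.card R).choose n := by
  have h := sum_choose_mul_card_monicsWithNumRoots (R := R) (le_refl n)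
  rwa [sum_range_succ, sum_eq_zero fun k hk => by
    rw [Nat.choose_eq_zero_of_lt (mem_range.1 hk), zero_mul], Nat.choose_self, Nat.sub_self,
    pow_zero, zero_add, one_mul, mul_one] at h

theorem card_monicsWithNumRoots_pred (n : ℕ) :
    #(monicsWithNumRoots R (n + 1) n) + (n + 1) * (Fintype.card R).choose (n + 1) =
      (Fintype.card R).choose n * Fintype.card R := by
  have h := sum_choose_mul_card_monicsWithNumRoots (R := R) (n.le_add_right 1)
  rwa [sum_range_succ, sum_range_succ, sum_eq_zero fun k hk => by
    rw [Nat.choose_eq_zero_of_lt (mem_range.1 hk), zero_mul], Nat.choose_self,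
    Nat.choose_succ_self_right, card_monicsWithNumRoots_self, Nat.add_sub_cancel_left,
    pow_one, zero_add, one_mul] at h

theorem card_monicsWithNumRoots_three_zero :
    #(monicsWithNumRoots R 3 0) =
      #(monicsWithNumRoots R 3 2) + 2 * #(monicsWithNumRoots R 3 3) := by
  have h₀ := sum_choose_mul_card_monicsWithNumRoots (R := R) (n := 3) (j := 0) (by norm_num)
  have h₁ := sum_choose_mul_card_monicsWithNumRoots (R := R) (n := 3) (j := 1) (by norm_num)
  simp only [sum_range_succ, sum_range_zero, Nat.choose_zero_right, Nat.choose_one_right,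
    Nat.sub_zero, Nat.reduceSub] at h₀ h₁
  have : Fintype.card R ^ 3 = Fintype.card R * Fintype.card R ^ 2 := by ring
  omega

end Monics

section CubicForm

variable {F : Type*} [Field F]

noncomputable def cubicForm (p : F[X]) : Module.Dual F (Fin 4 → F) :=
  ∑ i : Fin 4, p.coeff (3 - i) • LinearMap.proj i

theorem cubicForm_apply (p : F[X]) (x : Fin 4 → F) :
    cubicForm p x = p.coeff 3 * x 0 + p.coeff 2 * x 1 + p.coeff 1 * x 2 + p.coeff 0 * x 3 := by
  simp [cubicForm, Fin.sum_univ_four]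

theorem cubicForm_single (p : F[X]) (i : Fin 4) :
    cubicForm p (Pi.single i 1) = p.coeff (3 - i) := by
  fin_cases i <;> simp [cubicForm_apply]

theorem cubicForm_C_mul (c : F) (p : F[X]) : cubicForm (C c * p) = c • cubicForm p := by
  refine LinearMap.ext fun x => ?_
  simp only [cubicForm_apply, coeff_C_mul, LinearMap.smul_apply, smul_eq_mul]
  ring

theorem cubicForm_twistedCubic_point {p : F[X]} (hp : p.natDegree ≤ 3) (t : F) :
    cubicForm p ![t ^ 3, t ^ 2, t, 1] = p.eval t := by
  rw [cubicForm_apply, eval_eq_sum_range' (n := 4) (by omega)]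
  simp only [Matrix.cons_val_zero, Matrix.cons_val_one, Matrix.cons_val, sum_range_succ,
    sum_range_zero]
  ring

theorem cubicForm_twistedCubic_infinity (p : F[X]) : cubicForm p ![1, 0, 0, 0] = p.coeff 3 := by
  simp [cubicForm_apply]

theorem cubicForm_injOn : Set.InjOn (cubicForm (F := F)) {p | p.natDegree ≤ 3} := by
  intro p hp q hq h
  ext n
  by_cases hn : n ≤ 3
  · have := cubicForm_single p ⟨3 - n, by omega⟩
    rw [h, cubicForm_single] at this
    simpa [Nat.sub_sub_self hn] using this.symm
  · rw [coeff_eq_zero_of_natDegree_lt (lt_of_le_of_lt hp (by omega)),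
      coeff_eq_zero_of_natDegree_lt (lt_of_le_of_lt hq (by omega))]

theorem exists_cubicForm_eq (f : Module.Dual F (Fin 4 → F)) :
    ∃ p : F[X], p.natDegree ≤ 3 ∧ cubicForm p = f := by
  refine ⟨∑ i : Fin 4, C (f (Pi.single i 1)) * X ^ (3 - i : ℕ),
    natDegree_sum_le_of_forall_le _ _ fun i _ => (natDegree_C_mul_X_pow_le _ _).trans (by omega),
    LinearMap.pi_ext' fun i => LinearMap.ext_ring ?_⟩
  fin_cases i <;> simp [cubicForm_apply, Fin.sum_univ_four, coeff_X_pow, coeff_X]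

theorem cubicForm_ne_zero {p : F[X]} (hp : p ≠ 0) (hd : p.natDegree ≤ 3) : cubicForm p ≠ 0 :=
  fun h => hp (cubicForm_injOn hd (by simp) (h.trans (by ext; simp [cubicForm_apply])))

noncomputable def cubicPlane (p : F[X]) : Submodule F (Fin 4 → F) := LinearMap.ker (cubicForm p)

theorem finrank_cubicPlane {p : F[X]} (hp : p ≠ 0) (hd : p.natDegree ≤ 3) :
    Module.finrank F (cubicPlane p) = 3 := by
  have := Module.Dual.finrank_ker_add_one_of_ne_zero (cubicForm_ne_zero hp hd)
  rw [Module.finrank_fin_fun] at this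
  exact Nat.succ_injective this

theorem exists_monic_cubicPlane_eq {W : Submodule F (Fin 4 → F)} (hW : Module.finrank F W = 3) :
    ∃ p : F[X], p.Monic ∧ p.natDegree ≤ 3 ∧ cubicPlane p = W := by
  obtain ⟨f, hf, rfl⟩ := W.exists_dual_ker_eq_of_finrank_add_one (by simp [hW])
  obtain ⟨p, hd, rfl⟩ := exists_cubicForm_eq f
  have hlc : p.leadingCoeff ≠ 0 := leadingCoeff_ne_zero.2 fun hp => hf (by
    ext; simp [hp, cubicForm_apply])
  refine ⟨C p.leadingCoeff⁻¹ * p, monic_C_mul_of_mul_leadingCoeff_eq_one (inv_mul_cancel₀ hlc),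
    (natDegree_C_mul_le _ _).trans hd, ?_⟩
  rw [cubicPlane, cubicForm_C_mul, LinearMap.ker_smul _ _ (inv_ne_zero hlc)]

theorem cubicPlane_injOn : Set.InjOn (cubicPlane (F := F)) {p | p.Monic ∧ p.natDegree ≤ 3} := by
  rintro p ⟨hp, hpd⟩ q ⟨hq, hqd⟩ h
  obtain ⟨c, hc⟩ := Module.Dual.exists_eq_smul_of_ker_eq (cubicForm_ne_zero hp.ne_zero hpd) h
  rw [← cubicForm_C_mul] at hc
  have hqc := cubicForm_injOn hqd ((natDegree_C_mul_le _ _).trans hpd) hc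
  have hc1 : c = 1 := by
    simpa [hp.leadingCoeff, hq.leadingCoeff] using (congrArg leadingCoeff hqc).symm
  rw [hqc, hc1, C_1, one_mul]

end CubicForm

section TwistedCubic

variable {F : Type} [Field F]

noncomputable def twistedCubicPoint (t : F) : ℙ F (Fin 4 → F) :=
  Projectivization.mk F ![t ^ 3, t ^ 2, t, 1] (twistedCubic_vec_ne_zero _ _ _)

noncomputable def twistedCubicInfinity : ℙ F (Fin 4 → F) :=
  Projectivization.mk F ![1, 0, 0, 0] infty_vec_ne_zero

theorem twistedCubicPoint_injective : Function.Injective (twistedCubicPoint (F := F)) := by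
  intro t s h
  obtain ⟨a, ha⟩ := (Projectivization.mk_eq_mk_iff' _ _ _ _ _).1 h
  have h3 := congrFun ha 3
  have h2 := congrFun ha 2
  simp only [Matrix.smul_cons, smul_eq_mul, Matrix.cons_val] at h2 h3
  simp_all

theorem twistedCubicInfinity_ne_twistedCubicPoint (t : F) :
    twistedCubicInfinity ≠ twistedCubicPoint t := by
  intro h
  obtain ⟨a, ha⟩ := (Projectivization.mk_eq_mk_iff' _ _ _ _ _).1 h
  have h3 := congrFun ha 3
  have h0 := congrFun ha 0
  simp only [Matrix.smul_cons, smul_eq_mul, Matrix.cons_val] at h0 h3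
  simp_all

theorem twistedCubic_inter_cubicPlane {p : F[X]} (hd : p.natDegree ≤ 3) :
    {x ∈ twistedCubic F | x.submodule ≤ cubicPlane p} =
      twistedCubicPoint '' {t | p.IsRoot t} ∪ {x | x = twistedCubicInfinity ∧ p.coeff 3 = 0} := by
  ext x
  simp only [twistedCubic, cubicPlane, Set.mem_ofPred_eq, Set.mem_union, Set.mem_image]
  constructor
  · rintro ⟨⟨t, rfl⟩ | rfl, hx⟩
    · rw [Projectivization.submodule_mk_le_ker_iff, cubicForm_twistedCubic_point hd] at hx
      exact Or.inl ⟨t, hx, rfl⟩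
    · rw [Projectivization.submodule_mk_le_ker_iff, cubicForm_twistedCubic_infinity] at hx
      exact Or.inr ⟨rfl, hx⟩
  · rintro (⟨t, ht, rfl⟩ | ⟨rfl, h3⟩)
    · exact ⟨Or.inl ⟨t, rfl⟩, (Projectivization.submodule_mk_le_ker_iff _ _).2
        ((cubicForm_twistedCubic_point hd t).trans ht)⟩
    · exact ⟨Or.inr rfl, (Projectivization.submodule_mk_le_ker_iff _ _).2
        ((cubicForm_twistedCubic_infinity p).trans h3)⟩

theorem ncard_twistedCubic_inter_cubicPlane [DecidableEq F] {p : F[X]} (hp : p.Monic)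
    (hd : p.natDegree ≤ 3) :
    {x ∈ twistedCubic F | x.submodule ≤ cubicPlane p}.ncard =
      #p.roots.toFinset + if p.natDegree = 3 then 0 else 1 := by
  have hroots : {t | p.IsRoot t} = ↑p.roots.toFinset := by
    ext t; simp [mem_roots hp.ne_zero]
  have hdisj : Disjoint (twistedCubicPoint '' {t | p.IsRoot t})
      {x | x = twistedCubicInfinity ∧ p.coeff 3 = 0} := by
    rw [Set.disjoint_right]
    rintro _ ⟨rfl, -⟩ ⟨t, -, ht⟩
    exact twistedCubicInfinity_ne_twistedCubicPoint t ht.symm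
  rw [twistedCubic_inter_cubicPlane hd, Set.ncard_union_eq hdisj
    ((hroots ▸ p.roots.toFinset.finite_toSet).image _)
    ((Set.finite_singleton _).subset fun x hx => hx.1),
    Set.ncard_image_of_injective _ twistedCubicPoint_injective, hroots, Set.ncard_coe_finset]
  congr 1
  rcases hd.lt_or_eq with hlt | heq
  · simp [hlt.ne, coeff_eq_zero_of_natDegree_lt hlt]
  · have h3 : p.coeff 3 = 1 := heq ▸ hp.coeff_natDegree
    simp [heq, h3]

variable [Fintype F] [DecidableEq F]

theorem planes_meeting_twistedCubic_eq_image (k : ℕ) :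
    {W : Submodule F (Fin 4 → F) | Module.finrank F W = 3 ∧
        {p ∈ twistedCubic F | p.submodule ≤ W}.ncard = k} =
      cubicPlane '' ↑{p ∈ (range 4).biUnion (monics F) |
        #p.roots.toFinset + (if p.natDegree = 3 then 0 else 1) = k} := by
  ext W
  simp only [Set.mem_ofPred_eq, Set.mem_image, coe_filter, mem_biUnion, mem_range, mem_monics]
  constructor
  · rintro ⟨hW, hk⟩
    obtain ⟨p, hp, hd, rfl⟩ := exists_monic_cubicPlane_eq hW
    exact ⟨p, ⟨⟨p.natDegree, by omega, hp, rfl⟩,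
      (ncard_twistedCubic_inter_cubicPlane hp hd).symm.trans hk⟩, rfl⟩
  · rintro ⟨p, ⟨⟨d, hd, hp, rfl⟩, hk⟩, rfl⟩
    exact ⟨finrank_cubicPlane hp.ne_zero (by omega),
      (ncard_twistedCubic_inter_cubicPlane hp (by omega)).trans hk⟩

theorem ncard_planes_meeting_twistedCubic (k : ℕ) :
    {W : Submodule F (Fin 4 → F) | Module.finrank F W = 3 ∧
        {p ∈ twistedCubic F | p.submodule ≤ W}.ncard = k}.ncard =
      ∑ d ∈ range 4, #{p ∈ monics F d | #p.roots.toFinset + (if d = 3 then 0 else 1) = k} := by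
  rw [planes_meeting_twistedCubic_eq_image, Set.InjOn.ncard_image, Set.ncard_coe_finset,
    filter_biUnion, card_biUnion]
  · refine sum_congr rfl fun d _ => congrArg card (filter_congr fun p hp => ?_)
    rw [(mem_monics.1 hp).2]
  · intro d _ e _ hde
    refine disjoint_left.2 fun p hpd hpe => hde ?_
    exact (mem_monics.1 (mem_filter.1 hpd).1).2.symm.trans (mem_monics.1 (mem_filter.1 hpe).1).2
  · refine cubicPlane_injOn.mono fun p hp => ?_
    simp only [coe_filter, mem_biUnion, mem_range, mem_monics, Set.mem_ofPred_eq] at hp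
    obtain ⟨⟨d, hd, hpm, rfl⟩, -⟩ := hp
    exact ⟨hpm, by omega⟩

theorem ncard_planes_meeting_twistedCubic_succ (k : ℕ) :
    {W : Submodule F (Fin 4 → F) | Module.finrank F W = 3 ∧
        {p ∈ twistedCubic F | p.submodule ≤ W}.ncard = k + 1}.ncard =
      #(monicsWithNumRoots F 0 k) + #(monicsWithNumRoots F 1 k) + #(monicsWithNumRoots F 2 k) +
        #(monicsWithNumRoots F 3 (k + 1)) := by
  simp [ncard_planes_meeting_twistedCubic, sum_range_succ, monicsWithNumRoots]

theorem ncard_planes_meeting_twistedCubic_zero :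
    {W : Submodule F (Fin 4 → F) | Module.finrank F W = 3 ∧
        {p ∈ twistedCubic F | p.submodule ≤ W}.ncard = 0}.ncard =
      #(monicsWithNumRoots F 3 0) := by
  simp [ncard_planes_meeting_twistedCubic, sum_range_succ, monicsWithNumRoots]

end TwistedCubic

theorem Nat.choose_two_mul_self (q : ℕ) : q.choose 2 * q = 3 * q.choose 3 + 2 * q.choose 2 := by
  rcases lt_or_ge q 2 with hq | hq
  · simp [Nat.choose_eq_zero_of_lt hq, Nat.choose_eq_zero_of_lt (hq.trans (by norm_num : 2 < 3))]
  obtain ⟨m, rfl⟩ := Nat.exists_eq_add_of_le' hq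
  have h := Nat.choose_succ_right_eq (m + 2) 2
  rw [Nat.add_sub_cancel] at h
  linarith

theorem Nat.six_mul_choose_three_add_choose_two (q : ℕ) :
    6 * (q.choose 3 + q.choose 2) = q ^ 3 - q := by
  rcases lt_or_ge q 2 with hq | hq
  · interval_cases q <;> decide
  obtain ⟨m, rfl⟩ := Nat.exists_eq_add_of_le' hq
  have h₁ := Nat.choose_succ_right_eq (m + 2) 1
  have h₂ := Nat.choose_succ_right_eq (m + 2) 2
  norm_num at h₁ h₂
  refine Nat.eq_sub_of_add_eq ?_
  nlinarith

theorem card_planes_meeting_twistedCubic_general (F : Type) [Field F] [Fintype F] :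
    {W : Submodule F (Fin 4 → F) | Module.finrank F W = 3 ∧
        {p ∈ twistedCubic F | p.submodule ≤ W}.ncard = 3}.ncard =
      ((Fintype.card F) ^ 3 - Fintype.card F) / 6 ∧
    {W : Submodule F (Fin 4 → F) | Module.finrank F W = 3 ∧
        {p ∈ twistedCubic F | p.submodule ≤ W}.ncard = 2}.ncard =
      (Fintype.card F) ^ 2 + Fintype.card F ∧
    {W : Submodule F (Fin 4 → F) | Module.finrank F W = 3 ∧
        {p ∈ twistedCubic F | p.submodule ≤ W}.ncard = 0}.ncard =
      ((Fintype.card F) ^ 3 - Fintype.card F) / 3 := by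
  classical
  set q := Fintype.card F
  have N₃₃ : #(monicsWithNumRoots F 3 3) = q.choose 3 := card_monicsWithNumRoots_self 3
  have N₂₂ : #(monicsWithNumRoots F 2 2) = q.choose 2 := card_monicsWithNumRoots_self 2
  have N₁₁ : #(monicsWithNumRoots F 1 1) = q.choose 1 := card_monicsWithNumRoots_self 1
  have N₃₂ : #(monicsWithNumRoots F 3 2) + 3 * q.choose 3 = q.choose 2 * q :=
    card_monicsWithNumRoots_pred 2
  have N₂₁ : #(monicsWithNumRoots F 2 1) + 2 * q.choose 2 = q.choose 1 * q :=
    card_monicsWithNumRoots_pred 1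
  have N₁₂ : #(monicsWithNumRoots F 1 2) = 0 := card_monicsWithNumRoots_of_lt (by norm_num)
  have N₀₂ : #(monicsWithNumRoots F 0 2) = 0 := card_monicsWithNumRoots_of_lt (by norm_num)
  have N₀₁ : #(monicsWithNumRoots F 0 1) = 0 := card_monicsWithNumRoots_of_lt (by norm_num)
  have N₃₀ := card_monicsWithNumRoots_three_zero (R := F)
  have hA := Nat.choose_two_mul_self q
  have hB := Nat.six_mul_choose_three_add_choose_two q
  have hq : q ^ 2 = q * q := sq q
  rw [Nat.choose_one_right] at N₁₁ N₂₁
  refine ⟨?_, ?_, ?_⟩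
  · rw [ncard_planes_meeting_twistedCubic_succ 2]
    simp only [Nat.reduceAdd]
    omega
  · rw [ncard_planes_meeting_twistedCubic_succ 1]
    simp only [Nat.reduceAdd]
    omega
  · rw [ncard_planes_meeting_twistedCubic_zero]
    omega

/-- In `PG(3,q)`, `q ≥ 5`, the number of planes meeting the twisted cubic `C` in
exactly `3` points is `(q³-q)/6`, in exactly `2` points is `q²+q`, and in `0` points
is `(q³-q)/3`. -/
theorem card_planes_meeting_twistedCubic (F : Type) [Field F] [Fintype F]
    (hq : 5 ≤ Fintype.card F) :
    {W : Submodule F (Fin 4 → F) | Module.finrank F W = 3 ∧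
        {p ∈ twistedCubic F | p.submodule ≤ W}.ncard = 3}.ncard =
      ((Fintype.card F) ^ 3 - Fintype.card F) / 6 ∧
    {W : Submodule F (Fin 4 → F) | Module.finrank F W = 3 ∧
        {p ∈ twistedCubic F | p.submodule ≤ W}.ncard = 2}.ncard =
      (Fintype.card F) ^ 2 + Fintype.card F ∧
    {W : Submodule F (Fin 4 → F) | Module.finrank F W = 3 ∧
        {p ∈ twistedCubic F | p.submodule ≤ W}.ncard = 0}.ncard =
      ((Fintype.card F) ^ 3 - Fintype.card F) / 3 :=
  card_planes_meeting_twistedCubic_general F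
end

section
/- Let G be a group of collineations of PG(k−1,q). Then the number of orbits of G on points equals the number of orbits of G on hyperplanes. -/
/-!
Let `N` be the point–hyperplane incidence matrix of `PG(n-1,q)`. Any two distinct points lie on
the same number `b` of hyperplanes and every point lies on `a > b` hyperplanes, so
`N Nᵀ = (a - b) I + b J` is positive definite and the square matrix `N` is invertible.
A collineation `g` permutes points and hyperplanes compatibly with incidence, i.e.
`P_g N = N Q_g` for the two permutation matrices; hence `P_g` and `Q_g` are similar and have the
same trace: `g` fixes as many points as hyperplanes. Burnside's lemma, applied to the finite image
of `G` in `Perm(points) × Perm(hyperplanes)`, turns equal fixed-point counts into equal orbit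
counts.
-/

open Module Finset Function MulAction

namespace Matrix

variable {m n : Type*} [Fintype m] [Fintype n] [DecidableEq m]

theorem trace_eq_of_mul_eq_mul [DecidableEq n] {R : Type*} [CommRing R] {A : Matrix m m R}
    {B : Matrix n n R} {N : Matrix m n R} {M : Matrix n m R} (hMN : M * N = 1) (hNM : N * M = 1)
    (h : A * N = N * B) : A.trace = B.trace :=
  calc A.trace = (A * (N * M)).trace := by rw [hNM, Matrix.mul_one]
    _ = (M * (A * N)).trace := by rw [← Matrix.mul_assoc, trace_mul_comm]
    _ = B.trace := by rw [h, ← Matrix.mul_assoc, hMN, Matrix.one_mul]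

theorem isUnit_mul_transpose_self_of_apply_eq_ite {N : Matrix m n ℚ} {a b : ℚ}
    (hb : 0 ≤ b) (hab : b < a) (hN : ∀ i j, (N * Nᵀ) i j = if i = j then a else b) :
    IsUnit (N * Nᵀ) := by
  have hJ : N * Nᵀ = (a - b) • (1 : Matrix m m ℚ) + b • vecMulVec 1 1 := by
    ext i j
    rw [hN]
    split_ifs with hij <;> simp [hij]
  rw [hJ]
  refine ((PosDef.one.smul (sub_pos.2 hab)).add_posSemidef ?_).isUnit
  simpa using (posSemidef_vecMulVec_self_star (1 : m → ℚ)).smul hb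

theorem ncard_fixedPoints_eq_of_invariant [DecidableEq n] {N : Matrix m n ℚ}
    (hN : IsUnit (N * Nᵀ)) (e : m ≃ n) (σ : Equiv.Perm m) (τ : Equiv.Perm n)
    (hστ : ∀ i j, N (σ i) (τ j) = N i j) :
    (fixedPoints σ).ncard = (fixedPoints τ).ncard := by
  obtain ⟨M, hNM⟩ : ∃ M : Matrix n m ℚ, N * M = 1 :=
    ⟨Nᵀ * (N * Nᵀ)⁻¹, by
      rw [← Matrix.mul_assoc, mul_nonsing_inv _ ((isUnit_iff_isUnit_det _).1 hN)]⟩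
  have hMN : M * N = 1 := (mul_eq_one_comm_of_equiv e).1 hNM
  have h : σ.permMatrix ℚ * N = N * τ.permMatrix ℚ := by
    rw [PEquiv.toMatrix_toPEquiv_mul, PEquiv.mul_toMatrix_toPEquiv]
    ext i j
    simpa using hστ i (τ.symm j)
  exact_mod_cast (trace_permutation σ).symm.trans
    ((trace_eq_of_mul_eq_mul hMN hNM h).trans (trace_permutation τ))

end Matrix

theorem Equiv.Perm.ncard_fixedPoints_eq_of_incidence {α β : Type*} [Finite α] [Finite β]
    (r : α → β → Prop) {a b : ℕ} (hab : b < a) (hr : ∀ x, Nat.card {y // r x y} = a)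
    (hr' : ∀ x x', x ≠ x' → Nat.card {y // r x y ∧ r x' y} = b)
    (hcard : Nat.card α = Nat.card β) (σ : Perm α) (τ : Perm β)
    (hστ : ∀ x y, r (σ x) (τ y) ↔ r x y) :
    (fixedPoints σ).ncard = (fixedPoints τ).ncard := by
  classical
  have := Fintype.ofFinite α
  have := Fintype.ofFinite β
  let N : Matrix α β ℚ := .of fun x y => if r x y then 1 else 0
  have hNN : ∀ x x', (N * N.transpose) x x' = if x = x' then (a : ℚ) else b := by
    intro x x'
    simp only [Matrix.mul_apply, Matrix.transpose_apply, N, Matrix.of_apply, mul_ite, mul_one,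
      mul_zero, ← ite_and, sum_boole, ← Fintype.card_subtype, Fintype.card_eq_nat_card]
    split_ifs with hxx'
    · simp only [hxx', and_self, hr]
    · rw [hr' x' x (Ne.symm hxx')]
  refine Matrix.ncard_fixedPoints_eq_of_invariant
    (Matrix.isUnit_mul_transpose_self_of_apply_eq_ite b.cast_nonneg (by exact_mod_cast hab) hNN)
    (Fintype.equivOfCardEq (by simpa only [Fintype.card_eq_nat_card] using hcard)) σ τ
    fun x y => ?_
  simp only [N, Matrix.of_apply, hστ]

instance Submodule.finite_of_finite {F V : Type*} [Field F] [Finite F] [AddCommGroup V]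
    [Module F V] [FiniteDimensional F V] : Finite (Submodule F V) :=
  have := Module.finite_of_finite F (M := V)
  Finite.of_injective _ SetLike.coe_injective

namespace Submodule

variable {F V : Type*} [Field F] [AddCommGroup V] [Module F V]

theorem finrank_sup_eq_two {p p' : Submodule F V} (hp : finrank F p = 1)
    (hp' : finrank F p' = 1) (hpp' : p ≠ p') : finrank F ↥(p ⊔ p') = 2 := by
  have : FiniteDimensional F p := Module.finite_of_finrank_eq_succ hp
  have : FiniteDimensional F p' := Module.finite_of_finrank_eq_succ hp'
  have hlt : p ⊓ p' < p := inf_le_left.lt_of_ne fun h =>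
    hpp' (eq_of_le_of_finrank_eq (h ▸ inf_le_right) (hp.trans hp'.symm))
  have := finrank_lt_finrank_of_lt hlt
  have := finrank_sup_add_finrank_inf_eq p p'
  omega

variable [Finite F]

theorem card_lines :
    Nat.card {L : Submodule F V // finrank F L = 1} =
      ∑ i ∈ range (finrank F V), Nat.card F ^ i := by
  rw [← Nat.card_congr (Projectivization.equivSubmodule F V),
    Projectivization.card_of_finrank F V rfl]

theorem card_lines_le (U : Submodule F V) :
    Nat.card {L : Submodule F V // finrank F L = 1 ∧ L ≤ U} =
      ∑ i ∈ range (finrank F U), Nat.card F ^ i := by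
  rw [← card_lines]
  refine Nat.card_congr
    (((Equiv.subtypeEquiv (MapSubtype.orderIso U).toEquiv fun L => ?_).trans
      (Equiv.subtypeSubtypeEquivSubtypeInter (· ≤ U) (finrank F · = 1))).trans
        (Equiv.subtypeEquivRight fun _ => and_comm)).symm
  show _ ↔ finrank F (L.map U.subtype) = 1
  rw [finrank_map_subtype_eq]

variable [FiniteDimensional F V] {n : ℕ}

theorem card_hyperplanes_ge (hn : finrank F V = n) (hn0 : 0 < n) (U : Submodule F V) :
    Nat.card {H : {H : Submodule F V // finrank F H = n - 1} // U ≤ H.1} =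
      ∑ i ∈ range (n - finrank F U), Nat.card F ^ i := by
  have hU := Subspace.finrank_add_finrank_dualAnnihilator_eq U
  rw [Nat.card_congr (Equiv.subtypeSubtypeEquivSubtypeInter _ (U ≤ ·)),
    ← show finrank F U.dualAnnihilator = n - finrank F U by omega, ← card_lines_le]
  refine Nat.card_congr (Equiv.subtypeEquiv
    (Subspace.orderIsoFiniteDimensional.toEquiv.trans OrderDual.ofDual) fun H => ?_)
  have hH := Subspace.finrank_add_finrank_dualAnnihilator_eq H
  show _ ↔ finrank F H.dualAnnihilator = 1 ∧ H.dualAnnihilator ≤ U.dualAnnihilator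
  rw [Subspace.dualAnnihilator_le_dualAnnihilator_iff]
  exact and_congr_left fun _ => by omega

theorem card_hyperplanes (hn : finrank F V = n) (hn0 : 0 < n) :
    Nat.card {H : Submodule F V // finrank F H = n - 1} = ∑ i ∈ range n, Nat.card F ^ i := by
  rw [← Nat.card_congr (Equiv.subtypeUnivEquiv
      fun H : {H : Submodule F V // finrank F H = n - 1} => bot_le (a := H.1)),
    card_hyperplanes_ge hn hn0, finrank_bot, Nat.sub_zero]

theorem ncard_fixedPoints_lines_eq_hyperplanes (hn : finrank F V = n) (h2 : 2 ≤ n)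
    (π : Equiv.Perm {L : Submodule F V // finrank F L = 1})
    (ρ : Equiv.Perm {H : Submodule F V // finrank F H = n - 1})
    (hπρ : ∀ p H, (π p).1 ≤ (ρ H).1 ↔ p.1 ≤ H.1) :
    (fixedPoints π).ncard = (fixedPoints ρ).ncard := by
  have hlt : ∑ i ∈ range (n - 2), Nat.card F ^ i < ∑ i ∈ range (n - 1), Nat.card F ^ i := by
    rw [show n - 1 = n - 2 + 1 by omega, sum_range_succ]
    exact Nat.lt_add_of_pos_right (pow_pos Nat.card_pos _)
  refine Equiv.Perm.ncard_fixedPoints_eq_of_incidence (fun p H => p.1 ≤ H.1) hlt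
    (fun p => by rw [card_hyperplanes_ge hn (by omega), p.2]) (fun p p' hpp' => ?_) ?_ π ρ hπρ
  · rw [Nat.card_congr (Equiv.subtypeEquivRight fun H => sup_le_iff.symm),
      card_hyperplanes_ge hn (by omega), finrank_sup_eq_two p.2 p'.2 (Subtype.coe_ne_coe.2 hpp')]
  · rw [card_lines, card_hyperplanes hn (by omega), hn]

end Submodule

namespace MulAction

variable {G X Y : Type*} [Group G] [MulAction G X] [MulAction G Y]

theorem orbitRel_eq_of_surjective {H : Type*} [Group H] [MulAction H X] (f : G →* H)
    (hf : Surjective f) (hfX : ∀ (g : G) (x : X), f g • x = g • x) :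
    orbitRel G X = orbitRel H X := by
  ext x y
  simp only [orbitRel_apply, mem_orbit_iff]
  constructor
  · rintro ⟨g, rfl⟩
    exact ⟨f g, hfX g y⟩
  · rintro ⟨h, rfl⟩
    obtain ⟨g, rfl⟩ := hf h
    exact ⟨g, (hfX g y).symm⟩

theorem card_orbits_eq_of_ncard_fixedBy_eq_of_finite [Finite G] [Finite X] [Finite Y]
    (h : ∀ g : G, (fixedBy X g).ncard = (fixedBy Y g).ncard) :
    Nat.card (orbitRel.Quotient G X) = Nat.card (orbitRel.Quotient G Y) := by
  classical
  have := Fintype.ofFinite G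
  have := Fintype.ofFinite X
  have := Fintype.ofFinite Y
  have := Fintype.ofFinite (orbitRel.Quotient G X)
  have := Fintype.ofFinite (orbitRel.Quotient G Y)
  have hsum : ∑ g : G, Fintype.card (fixedBy X g) = ∑ g : G, Fintype.card (fixedBy Y g) := by
    simpa only [Fintype.card_eq_nat_card, Nat.card_coe_set_eq] using
      sum_congr rfl fun g _ => h g
  rw [sum_card_fixedBy_eq_card_orbits_mul_card_group,
    sum_card_fixedBy_eq_card_orbits_mul_card_group,
    Nat.mul_left_inj Fintype.card_ne_zero] at hsum
  simpa only [Fintype.card_eq_nat_card] using hsum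

theorem card_orbits_eq_of_ncard_fixedBy_eq [Finite X] [Finite Y]
    (h : ∀ g : G, (fixedBy X g).ncard = (fixedBy Y g).ncard) :
    Nat.card (orbitRel.Quotient G X) = Nat.card (orbitRel.Quotient G Y) := by
  let f := (toPermHom G X).prod (toPermHom G Y)
  let _ : MulAction f.range X := compHom X ((MonoidHom.fst _ _).comp f.range.subtype)
  let _ : MulAction f.range Y := compHom Y ((MonoidHom.snd _ _).comp f.range.subtype)
  have hX := orbitRel_eq_of_surjective (X := X) f.rangeRestrict f.rangeRestrict_surjective
    fun _ _ => rfl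
  have hY := orbitRel_eq_of_surjective (X := Y) f.rangeRestrict f.rangeRestrict_surjective
    fun _ _ => rfl
  unfold orbitRel.Quotient
  rw [hX, hY]
  refine card_orbits_eq_of_ncard_fixedBy_eq_of_finite fun k => ?_
  obtain ⟨g, rfl⟩ := f.rangeRestrict_surjective k
  exact h g

end MulAction

/-- **Block's theorem.** Let `G` be a group of collineations of `PG(k-1,q)`: `G` acts
on the points (1-dimensional subspaces of `F_q^k`) and on the hyperplanes
(`(k-1)`-dimensional subspaces), with every element acting as a semilinear bijection
of `F_q^k`. Then the number of `G`-orbits of points equals the number of `G`-orbits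
of hyperplanes. -/
theorem block_point_hyperplane_orbit_count (F : Type) [Field F] [Fintype F]
    (k : ℕ) (hk : 2 ≤ k) (G : Type) [Group G]
    [MulAction G {W : Submodule F (Fin k → F) // Module.finrank F W = 1}]
    [MulAction G {W : Submodule F (Fin k → F) // Module.finrank F W = k - 1}]
    (hG : ∀ g : G, ∃ (σ : F ≃+* F) (f : (Fin k → F) ≃+ (Fin k → F)),
      (∀ (c : F) (x : Fin k → F), f (c • x) = σ c • f x) ∧
      (∀ p : {W : Submodule F (Fin k → F) // Module.finrank F W = 1},
        ((g • p).1 : Set (Fin k → F)) = ⇑f '' (p.1 : Set (Fin k → F))) ∧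
      (∀ W : {W : Submodule F (Fin k → F) // Module.finrank F W = k - 1},
        ((g • W).1 : Set (Fin k → F)) = ⇑f '' (W.1 : Set (Fin k → F)))) :
    Nat.card (MulAction.orbitRel.Quotient G
        {W : Submodule F (Fin k → F) // Module.finrank F W = 1}) =
      Nat.card (MulAction.orbitRel.Quotient G
        {W : Submodule F (Fin k → F) // Module.finrank F W = k - 1}) := by
  have hinc : ∀ (g : G) (p : {W : Submodule F (Fin k → F) // finrank F W = 1})
      (H : {W : Submodule F (Fin k → F) // finrank F W = k - 1}),
      (g • p).1 ≤ (g • H).1 ↔ p.1 ≤ H.1 := by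
    intro g p H
    obtain ⟨-, f, -, hp, hH⟩ := hG g
    rw [← SetLike.coe_subset_coe, hp, hH, Set.image_subset_image_iff f.injective,
      SetLike.coe_subset_coe]
  exact card_orbits_eq_of_ncard_fixedBy_eq fun g =>
    Submodule.ncard_fixedPoints_lines_eq_hyperplanes (finrank_fin_fun F) hk
      (toPerm g) (toPerm g) (hinc g)
end
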